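/- For every n ≥ 1, every normal natural deduction proof of φ_n in M→ contains at least 2^n assumption occurrences of the formula ξ_n. -/
import Mathlib


/-- Formulas of purely implicational logic, built from atoms (numbered by `ℕ`)
by the single connective `→` (`impl`). -/
inductive Fm : Type
  | atom : ℕ → Fm
  | impl : Fm → Fm → Fm
deriving DecidableEq

/-- χ[X,Y] = (((X → Y) → X) → X) → Y. -/
def chi (X Y : Fm) : Fm := (((X.impl Y).impl X).impl X).impl Y

/-- The atom `Fm.atom 0` is C, and `Fm.atom k` is D_k for k ≥ 1.
ξ₁ = χ[D₁, C] and ξ_{i+1} = χ[D_{i+1}, ξ_i]  (the value at 0 is irrelevant). -/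
def xi : ℕ → Fm
  | 0 => chi (.atom 1) (.atom 0)
  | 1 => chi (.atom 1) (.atom 0)
  | n + 2 => chi (.atom (n + 2)) (xi (n + 1))

/-- φ_n = ξ_n → C. -/
def phi (n : ℕ) : Fm := (xi n).impl (.atom 0)

/-- Natural deduction derivations for M→, indexed by the multiset of open
assumption occurrences and the conclusion.  `assume a` is a one-occurrence
assumption of `a`; `intro n` is →-introduction discharging exactly `n`
occurrences of the assumption `a`; `elim` is →-elimination whose second
premise (the implication) is the major premise. -/
inductive Deriv : Multiset Fm → Fm → Type
  | assume (a : Fm) : Deriv {a} a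
  | intro {Γ : Multiset Fm} {a b : Fm} (n : ℕ)
      (d : Deriv (Γ + Multiset.replicate n a) b) : Deriv Γ (a.impl b)
  | elim {Γ Δ : Multiset Fm} {a b : Fm}
      (minor : Deriv Γ a) (major : Deriv Δ (a.impl b)) : Deriv (Γ + Δ) b

/-- The last rule of the derivation is an →-introduction. -/
def Deriv.isIntro : ∀ {Γ b}, Deriv Γ b → Prop
  | _, _, .intro _ _ => True
  | _, _, _ => False

/-- A derivation is normal if no formula occurrence is both the conclusion of
an →-introduction and the major premise of an →-elimination. -/
def Deriv.normal : ∀ {Γ b}, Deriv Γ b → Prop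
  | _, _, .assume _ => True
  | _, _, .intro _ d => d.normal
  | _, _, .elim minor major => minor.normal ∧ major.normal ∧ ¬ major.isIntro

/-- Number of assumption occurrences (leaves) of the formula `a` in a
derivation (whether discharged in the derivation or not). -/
def Deriv.countA (a : Fm) : ∀ {Γ b}, Deriv Γ b → ℕ
  | _, _, .assume c => if c = a then 1 else 0
  | _, _, .intro _ d => Deriv.countA a d
  | _, _, .elim minor major => Deriv.countA a minor + Deriv.countA a major

-- auxiliary formula families
def XI : ℕ → Fm
  | 0 => .atom 0
  | m+1 => ((((Fm.atom (m+1)).impl (XI m)).impl (.atom (m+1))).impl (.atom (m+1))).impl (XI m)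

def DD (k : ℕ) : Fm := .atom k
def RR (k : ℕ) : Fm := (Fm.atom k).impl (XI (k-1))
def QQ (k : ℕ) : Fm := (RR k).impl (.atom k)
def PP (k : ℕ) : Fm := (QQ k).impl (.atom k)

lemma XI_succ (m : ℕ) : XI (m+1) = (PP (m+1)).impl (XI m) := rfl

lemma XI_eq_xi : ∀ m, 1 ≤ m → XI m = xi m := by
  intro m hm
  induction m with
  | zero => omega
  | succ m ih =>
    rcases Nat.eq_zero_or_pos m with h | h
    · subst h; rfl
    · rcases Nat.exists_eq_add_of_le h with ⟨m', rfl⟩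
      show XI (1 + m' + 1) = xi (1 + m' + 1)
      have h1 : 1 + m' + 1 = m' + 2 := by omega
      rw [h1]
      have := ih (by omega)
      show ((((Fm.atom (m'+2)).impl (XI (m'+1))).impl (.atom (m'+2))).impl (.atom (m'+2))).impl (XI (m'+1)) = xi (m'+2)
      rw [show (1:ℕ) + m' = m' + 1 by omega] at this
      rw [this]
      rfl

-- distinctness lemmas
lemma QQ_ne_RR (k j : ℕ) (hj : 1 ≤ j) : QQ k ≠ RR j := by
  simp only [QQ, RR]
  intro h
  injection h with h1 h2
  exact absurd h1 (by simp [RR])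
lemma PP_ne_RR (k j : ℕ) (hj : 1 ≤ j) : PP k ≠ RR j := by
  simp only [PP, RR]
  intro h
  injection h with h1 h2
  exact absurd h1 (by simp [QQ])
lemma PP_ne_QQ (k j : ℕ) (hk : 1 ≤ k) : PP j ≠ QQ k := by
  simp only [PP, QQ]
  intro h
  injection h with h1 h2
  exact QQ_ne_RR j k hk h1
lemma XI_ne_PP (m k : ℕ) (hk : 1 ≤ k) : XI m ≠ PP k := by
  cases m with
  | zero => simp [XI, PP]
  | succ m' =>
    rw [XI_succ]
    simp only [PP]
    intro h
    injection h with h1 h2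
    cases hm : m' with
    | zero => rw [hm] at h2; exact absurd h2 (by simp [XI]; omega)
    | succ m'' => rw [hm] at h2; exact Fm.noConfusion h2
lemma XI_ne_QQ (m k : ℕ) (hk : 1 ≤ k) : XI m ≠ QQ k := by
  cases m with
  | zero => simp [XI, QQ]
  | succ m' =>
    rw [XI_succ]
    simp only [QQ]
    intro h
    injection h with h1 h2
    cases hm : m' with
    | zero => rw [hm] at h2; exact absurd h2 (by simp [XI]; omega)
    | succ m'' => rw [hm] at h2; exact Fm.noConfusion h2
lemma XI_ne_RR (m k : ℕ) : XI m ≠ RR k := by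
  cases m with
  | zero => simp [XI, RR]
  | succ m' =>
    rw [XI_succ]
    simp only [RR, PP]
    intro h
    injection h with h1 h2
    exact Fm.noConfusion h1
lemma XI_ne_DD (m k : ℕ) (hk : 1 ≤ k) : XI m ≠ DD k := by
  cases m with
  | zero => simp [XI, DD]; omega
  | succ m' => rw [XI_succ]; simp [DD]
lemma PP_ne_DD (j k : ℕ) : PP j ≠ DD k := by simp [PP, DD]
lemma QQ_ne_DD (j k : ℕ) : QQ j ≠ DD k := by simp [QQ, DD]
lemma RR_ne_DD (j k : ℕ) : RR j ≠ DD k := by simp [RR, DD]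
lemma DD_inj {j k : ℕ} (h : DD j = DD k) : j = k := by
  simpa [DD] using h
lemma PP_inj {j k : ℕ} (h : PP j = PP k) : j = k := by
  simp only [PP] at h; injection h with h1 h2; simpa [DD] using h2
lemma QQ_inj {j k : ℕ} (h : QQ j = QQ k) : j = k := by
  simp only [QQ] at h; injection h with h1 h2; simpa [DD] using h2
lemma RR_inj {j k : ℕ} (h : RR j = RR k) : j = k := by
  simp only [RR] at h; injection h with h1 h2; simpa [DD] using h1
lemma XI_inj : ∀ {j k : ℕ}, XI j = XI k → j = k := by
  intro j
  induction j with
  | zero => intro k h; cases k with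
    | zero => rfl
    | succ k' => rw [XI_succ] at h; exact Fm.noConfusion h
  | succ j' ih =>
    intro k h
    cases k with
    | zero => rw [XI_succ] at h; exact Fm.noConfusion h
    | succ k' =>
      rw [XI_succ, XI_succ] at h
      injection h with h1 h2
      rw [ih h2]

-- the finite set of possibly-inserted assumption formulas, used as termination measure
def AAn (n : ℕ) : Finset Fm :=
  (Finset.Icc 1 n).biUnion (fun k => {DD k, PP k, QQ k, RR k})

lemma DD_mem_AAn {n k : ℕ} (h1 : 1 ≤ k) (h2 : k ≤ n) : DD k ∈ AAn n := by
  simp [AAn]; exact ⟨k, ⟨h1, h2⟩, by tauto⟩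
lemma PP_mem_AAn {n k : ℕ} (h1 : 1 ≤ k) (h2 : k ≤ n) : PP k ∈ AAn n := by
  simp [AAn]; exact ⟨k, ⟨h1, h2⟩, by tauto⟩
lemma QQ_mem_AAn {n k : ℕ} (h1 : 1 ≤ k) (h2 : k ≤ n) : QQ k ∈ AAn n := by
  simp [AAn]; exact ⟨k, ⟨h1, h2⟩, by tauto⟩

lemma sdiff_insert_card_le (A S : Finset Fm) (x : Fm) :
    (A \ insert x S).card ≤ (A \ S).card :=
  Finset.card_le_card (Finset.sdiff_subset_sdiff (le_refl _) (Finset.subset_insert _ _))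

lemma sdiff_insert_card_lt {A S : Finset Fm} {x : Fm} (hx : x ∈ A) (hxS : x ∉ S) :
    (A \ insert x S).card < (A \ S).card := by
  apply Finset.card_lt_card
  constructor
  · exact Finset.sdiff_subset_sdiff (le_refl _) (Finset.subset_insert _ _)
  · intro hsub
    have : x ∈ A \ S := Finset.mem_sdiff.mpr ⟨hx, hxS⟩
    have := hsub this
    simp [Finset.mem_sdiff] at this

lemma lex3 {c c' r r' a a' : ℕ} (h1 : c ≤ c') (h2 : r < r' ∨ (r = r' ∧ a < a')) :
    Prod.Lex (· < ·) (Prod.Lex (· < ·) (· < ·)) (c, r, a) (c', r', a') := by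
  rcases lt_or_eq_of_le h1 with h | h
  · exact Prod.Lex.left _ _ h
  · subst h
    rcases h2 with h | ⟨h, h'⟩
    · exact Prod.Lex.right _ (Prod.Lex.left _ _ h)
    · subst h; exact Prod.Lex.right _ (Prod.Lex.right _ h')

mutual
def cD (n k : ℕ) (S : Finset Fm) : ℕ :=
  if hk : 1 ≤ k ∧ k ≤ n then
    if DD k ∈ S ∨ (QQ k ∈ S ∧ (RR k ∈ S ∨ PP k ∈ S)) then 0
    else if QQ k ∈ S then cxi n (k-1) (insert (DD k) S) else 2^n
  else 0
  termination_by ((AAn n \ S).card, 0, 0)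
  decreasing_by
    exact Prod.Lex.left _ _ (sdiff_insert_card_lt (DD_mem_AAn hk.1 hk.2) (by tauto))

def cP (n k : ℕ) (S : Finset Fm) : ℕ :=
  if PP k ∈ S then 0 else cD n k (insert (QQ k) S)
  termination_by ((AAn n \ S).card, 1, 0)
  decreasing_by
    all_goals simp_wf
    all_goals first
      | exact lex3 (le_refl _) (Or.inl (by omega))
      | exact lex3 (le_refl _) (Or.inr ⟨rfl, by omega⟩)
      | exact lex3 (sdiff_insert_card_le _ _ _) (Or.inl (by omega))

def sP (n lo : ℕ) : ℕ → Finset Fm → ℕ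
  | 0, _ => 0
  | h+1, S => if h+1 < lo then 0 else cP n (h+1) S + sP n lo h S
  termination_by hi S => ((AAn n \ S).card, 2, hi)
  decreasing_by
    all_goals simp_wf
    all_goals first
      | exact lex3 (le_refl _) (Or.inl (by omega))
      | exact lex3 (le_refl _) (Or.inr ⟨rfl, by omega⟩)
      | exact lex3 (sdiff_insert_card_le _ _ _) (Or.inl (by omega))

def o3 (n m : ℕ) : ℕ → Finset Fm → ℕ
  | 0, _ => 2^n
  | j+1, S => min (if m < j+1 ∧ RR (j+1) ∈ S then cD n (j+1) S + sP n (m+1) j S else 2^n)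
      (o3 n m j S)
  termination_by j S => ((AAn n \ S).card, 3, j)
  decreasing_by
    all_goals simp_wf
    all_goals first
      | exact lex3 (le_refl _) (Or.inl (by omega))
      | exact lex3 (le_refl _) (Or.inr ⟨rfl, by omega⟩)
      | exact lex3 (sdiff_insert_card_le _ _ _) (Or.inl (by omega))

def cxi (n m : ℕ) (S : Finset Fm) : ℕ :=
  min (min (1 + sP n (m+1) n S)
    (match m with
     | 0 => 2^n
     | m0+1 => cxi n m0 (insert (PP (m0+1)) S)))
    (o3 n m n S)
  termination_by ((AAn n \ S).card, 4+m, 0)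
  decreasing_by
    all_goals simp_wf
    all_goals first
      | exact lex3 (le_refl _) (Or.inl (by omega))
      | exact lex3 (sdiff_insert_card_le _ _ _) (Or.inl (by omega))
end

def cQ (n k : ℕ) (S : Finset Fm) : ℕ := if QQ k ∈ S ∨ DD k ∈ S then 0 else 2^n
def cR (n k : ℕ) (S : Finset Fm) : ℕ := if RR k ∈ S then 0 else cxi n (k-1) (insert (DD k) S)

def cF (n : ℕ) (g : Fm) (S : Finset Fm) : ℕ :=
  ((Finset.range (n+1)).sup fun m => if g = XI m then cxi n m S else 0) ⊔
  (((Finset.Icc 1 n).sup fun k => if g = PP k then cP n k S else 0) ⊔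
  (((Finset.Icc 1 n).sup fun k => if g = QQ k then cQ n k S else 0) ⊔
  (((Finset.Icc 1 n).sup fun k => if g = RR k then cR n k S else 0) ⊔
  ((Finset.Icc 1 n).sup fun k => if g = DD k then cD n k S else 0))))

lemma cxi_le_cF {n m : ℕ} (h : m ≤ n) (S : Finset Fm) : cxi n m S ≤ cF n (XI m) S := by
  refine le_trans ?_ le_sup_left
  refine le_trans ?_ (Finset.le_sup (Finset.mem_range.mpr (by omega) : m ∈ Finset.range (n+1)))
  simp

lemma cP_le_cF {n k : ℕ} (h1 : 1 ≤ k) (h2 : k ≤ n) (S : Finset Fm) : cP n k S ≤ cF n (PP k) S := by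
  refine le_trans ?_ (le_trans le_sup_left le_sup_right)
  refine le_trans ?_ (Finset.le_sup (Finset.mem_Icc.mpr ⟨h1, h2⟩ : k ∈ Finset.Icc 1 n))
  simp

lemma cQ_le_cF {n k : ℕ} (h1 : 1 ≤ k) (h2 : k ≤ n) (S : Finset Fm) : cQ n k S ≤ cF n (QQ k) S := by
  refine le_trans ?_ (le_trans (le_trans le_sup_left le_sup_right) le_sup_right)
  refine le_trans ?_ (Finset.le_sup (Finset.mem_Icc.mpr ⟨h1, h2⟩ : k ∈ Finset.Icc 1 n))
  simp

lemma cR_le_cF {n k : ℕ} (h1 : 1 ≤ k) (h2 : k ≤ n) (S : Finset Fm) : cR n k S ≤ cF n (RR k) S := by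
  refine le_trans ?_ (le_trans (le_trans (le_trans le_sup_left le_sup_right) le_sup_right) le_sup_right)
  refine le_trans ?_ (Finset.le_sup (Finset.mem_Icc.mpr ⟨h1, h2⟩ : k ∈ Finset.Icc 1 n))
  simp

lemma cD_le_cF {n k : ℕ} (h1 : 1 ≤ k) (h2 : k ≤ n) (S : Finset Fm) : cD n k S ≤ cF n (DD k) S := by
  refine le_trans ?_ (le_trans (le_trans (le_trans le_sup_right le_sup_right) le_sup_right) le_sup_right)
  refine le_trans ?_ (Finset.le_sup (Finset.mem_Icc.mpr ⟨h1, h2⟩ : k ∈ Finset.Icc 1 n))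
  simp

lemma cF_le {n : ℕ} {g : Fm} {S : Finset Fm} {X : ℕ}
    (hxi : ∀ m, m ≤ n → g = XI m → cxi n m S ≤ X)
    (hp : ∀ k, 1 ≤ k → k ≤ n → g = PP k → cP n k S ≤ X)
    (hq : ∀ k, 1 ≤ k → k ≤ n → g = QQ k → cQ n k S ≤ X)
    (hr : ∀ k, 1 ≤ k → k ≤ n → g = RR k → cR n k S ≤ X)
    (hd : ∀ k, 1 ≤ k → k ≤ n → g = DD k → cD n k S ≤ X) :
    cF n g S ≤ X := by
  refine sup_le ?_ (sup_le ?_ (sup_le ?_ (sup_le ?_ ?_)))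
  · refine Finset.sup_le fun m hm => ?_
    rw [Finset.mem_range] at hm
    split
    · next h => exact hxi m (by omega) h
    · exact Nat.zero_le _
  · refine Finset.sup_le fun k hk => ?_
    rw [Finset.mem_Icc] at hk
    split
    · next h => exact hp k hk.1 hk.2 h
    · exact Nat.zero_le _
  · refine Finset.sup_le fun k hk => ?_
    rw [Finset.mem_Icc] at hk
    split
    · next h => exact hq k hk.1 hk.2 h
    · exact Nat.zero_le _
  · refine Finset.sup_le fun k hk => ?_
    rw [Finset.mem_Icc] at hk
    split
    · next h => exact hr k hk.1 hk.2 h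
    · exact Nat.zero_le _
  · refine Finset.sup_le fun k hk => ?_
    rw [Finset.mem_Icc] at hk
    split
    · next h => exact hd k hk.1 hk.2 h
    · exact Nat.zero_le _

lemma sP_eq_zero {n lo : ℕ} (S : Finset Fm) : ∀ hi, hi < lo → sP n lo hi S = 0 := by
  intro hi
  induction hi with
  | zero => intro _; simp [sP]
  | succ h ih => intro hlt; rw [sP]; simp only [if_pos hlt]

lemma sP_succ_eq {n lo hi : ℕ} (S : Finset Fm) (h : lo ≤ hi+1) :
    sP n lo (hi+1) S = cP n (hi+1) S + sP n lo hi S := by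
  rw [sP]; simp only [if_neg (by omega : ¬ hi+1 < lo)]

lemma cxi_eq (n m : ℕ) (S : Finset Fm) : cxi n m S =
    min (min (1 + sP n (m+1) n S)
      (match m with
       | 0 => 2^n
       | m0+1 => cxi n m0 (insert (PP (m0+1)) S)))
      (o3 n m n S) := by
  rw [cxi.eq_def]

lemma cxi_le_o1 (n m : ℕ) (S : Finset Fm) : cxi n m S ≤ 1 + sP n (m+1) n S := by
  rw [cxi_eq]; exact le_trans (min_le_left _ _) (min_le_left _ _)

lemma cxi_le_one (n : ℕ) (S : Finset Fm) : cxi n n S ≤ 1 := by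
  have := cxi_le_o1 n n S
  rwa [sP_eq_zero S n (by omega), Nat.add_zero] at this

lemma cxi_le_intro (n m0 : ℕ) (S : Finset Fm) :
    cxi n (m0+1) S ≤ cxi n m0 (insert (PP (m0+1)) S) := by
  rw [cxi_eq]; exact le_trans (min_le_left _ _) (min_le_right _ _)

lemma o3_le_of {n m k : ℕ} (S : Finset Fm) (hmk : m < k) (hR : RR k ∈ S) :
    ∀ j, k ≤ j → o3 n m j S ≤ cD n k S + sP n (m+1) (k-1) S := by
  intro j
  induction j with
  | zero => omega
  | succ j ih =>
    intro hkj
    rcases Nat.eq_or_lt_of_le hkj with h | h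
    · rw [o3]
      refine le_trans (min_le_left _ _) ?_
      rw [h] at hmk hR ⊢
      rw [if_pos ⟨hmk, hR⟩]
      have hj : j + 1 - 1 = j := by omega
      rw [hj]
    · rw [o3]
      exact le_trans (min_le_right _ _) (ih (by omega))

lemma cxi_le_R {n m k : ℕ} (S : Finset Fm) (hmk : m < k) (hkn : k ≤ n) (hR : RR k ∈ S) :
    cxi n m S ≤ cD n k S + sP n (m+1) (k-1) S := by
  rw [cxi_eq]
  exact le_trans (min_le_right _ _) (o3_le_of S hmk hR n hkn)

lemma cP_zero {n k : ℕ} {S : Finset Fm} (h : PP k ∈ S) : cP n k S = 0 := by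
  rw [cP, if_pos h]

lemma cQ_zero {n k : ℕ} {S : Finset Fm} (h : QQ k ∈ S ∨ DD k ∈ S) : cQ n k S = 0 := by
  rw [cQ, if_pos h]

lemma cR_zero {n k : ℕ} {S : Finset Fm} (h : RR k ∈ S) : cR n k S = 0 := by
  rw [cR, if_pos h]

lemma cD_zero {n k : ℕ} {S : Finset Fm} (h : DD k ∈ S) : cD n k S = 0 := by
  rw [cD]
  split
  · rw [if_pos (Or.inl h)]
  · rfl

lemma cD_le_cR {n k : ℕ} {S : Finset Fm} (hq : QQ k ∈ S) : cD n k S ≤ cR n k S := by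
  rw [cD]
  split
  · by_cases h1 : DD k ∈ S ∨ QQ k ∈ S ∧ (RR k ∈ S ∨ PP k ∈ S)
    · rw [if_pos h1]; exact Nat.zero_le _
    · have hr : RR k ∉ S := by tauto
      rw [if_neg h1, cR, if_neg hr]
  · exact Nat.zero_le _

lemma cD_le_cQ {n k : ℕ} {S : Finset Fm} (hp : PP k ∈ S) : cD n k S ≤ cQ n k S := by
  rw [cD]
  split
  · by_cases h1 : DD k ∈ S ∨ QQ k ∈ S ∧ (RR k ∈ S ∨ PP k ∈ S)
    · rw [if_pos h1]; exact Nat.zero_le _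
    · have hq : QQ k ∉ S := by tauto
      have hd : DD k ∉ S := by tauto
      rw [if_neg h1, if_neg hq, cQ, if_neg (by tauto)]
  · exact Nat.zero_le _

lemma cP_le_intro (n k : ℕ) (S : Finset Fm) : cP n k S ≤ cD n k (insert (QQ k) S) := by
  rw [cP]
  split
  · exact Nat.zero_le _
  · exact le_refl _

lemma cR_le_intro (n k : ℕ) (S : Finset Fm) : cR n k S ≤ cxi n (k-1) (insert (DD k) S) := by
  rw [cR]
  split
  · exact Nat.zero_le _
  · exact le_refl _

lemma cQ_le_intro {n k : ℕ} (hk1 : 1 ≤ k) (hk2 : k ≤ n) (S : Finset Fm) :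
    cQ n k S ≤ cD n k (insert (RR k) S) := by
  rw [cQ]
  by_cases h0 : QQ k ∈ S ∨ DD k ∈ S
  · rw [if_pos h0]; exact Nat.zero_le _
  · push_neg at h0
    rw [if_neg (by tauto)]
    have hd : DD k ∉ insert (RR k) S := by
      simp only [Finset.mem_insert]
      rintro (h | h)
      · exact RR_ne_DD k k h.symm
      · exact h0.2 h
    have hq : QQ k ∉ insert (RR k) S := by
      simp only [Finset.mem_insert]
      rintro (h | h)
      · exact QQ_ne_RR k k hk1 h
      · exact h0.1 h
    rw [cD]
    rw [dif_pos ⟨hk1, hk2⟩, if_neg (by tauto), if_neg hq]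

def IsA (n : ℕ) (a : Fm) : Prop :=
  a = XI n ∨ ∃ k, 1 ≤ k ∧ k ≤ n ∧ (a = PP k ∨ a = QQ k ∨ a = RR k ∨ a = DD k)

lemma foldr_XI {n : ℕ} (S : Finset Fm) :
    ∀ (l : List Fm) (m : ℕ) (b : Fm), m ≤ n → XI m = l.foldr Fm.impl b →
    ∃ m', m' ≤ m ∧ b = XI m' ∧ sP n (m'+1) m S ≤ (l.map (fun x => cF n x S)).sum := by
  intro l
  induction l with
  | nil =>
    intro m b hmn h
    refine ⟨m, le_refl m, h.symm ▸ rfl, ?_⟩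
    rw [sP_eq_zero S m (by omega)]
    exact Nat.zero_le _
  | cons x l ih =>
    intro m b hmn h
    cases m with
    | zero => exact Fm.noConfusion h
    | succ m0 =>
      rw [XI_succ] at h
      simp only [List.foldr_cons] at h
      injection h with h1 h2
      obtain ⟨m', hm', hb, hsum⟩ := ih m0 b (by omega) h2
      refine ⟨m', by omega, hb, ?_⟩
      rw [sP_succ_eq S (by omega)]
      simp only [List.map_cons, List.sum_cons]
      have hcp : cP n (m0+1) S ≤ cF n x S := by
        rw [← h1]; exact cP_le_cF (by omega) (by omega) S
      omega

lemma KEY {n : ℕ} (hn : 1 ≤ n) {S : Finset Fm} {a : Fm} (ha : IsA n a) (haS : a ∈ S) :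
    ∀ (l : List Fm) (b : Fm), a = l.foldr Fm.impl b →
    cF n b S ≤ (if a = xi n then 1 else 0) + (l.map (fun x => cF n x S)).sum := by
  rcases ha with hXI | ⟨k, hk1, hk2, hrole⟩
  · -- a = XI n
    intro l b hdec
    rw [hXI] at hdec haS ⊢
    obtain ⟨m', hm', hb, hsum⟩ := foldr_XI S l n b (le_refl n) hdec
    subst hb
    rw [if_pos (XI_eq_xi n hn)]
    refine cF_le ?_ ?_ ?_ ?_ ?_
    · intro m hmn hbm
      have hmm : m = m' := XI_inj hbm.symm
      subst hmm
      have := cxi_le_o1 n m S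
      omega
    · intro j hj1 _ hbm; exact absurd hbm (XI_ne_PP m' j hj1)
    · intro j hj1 _ hbm; exact absurd hbm (XI_ne_QQ m' j hj1)
    · intro j _ _ hbm; exact absurd hbm (XI_ne_RR m' j)
    · intro j hj1 _ hbm; exact absurd hbm (XI_ne_DD m' j hj1)
  · rcases hrole with hPP | hQQ | hRR | hDD
    · -- a = PP k
      subst hPP
      intro l b hdec
      cases l with
      | nil =>
        simp only [List.foldr_nil] at hdec
        subst hdec
        refine cF_le ?_ ?_ ?_ ?_ ?_
        · intro m _ hbm; exact absurd hbm.symm (XI_ne_PP m k hk1)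
        · intro j _ _ hbm
          have hjk := PP_inj hbm
          subst hjk
          rw [cP_zero haS]; exact Nat.zero_le _
        · intro j hj1 _ hbm; exact absurd hbm (PP_ne_QQ j k hj1)
        · intro j hj1 _ hbm; exact absurd hbm (PP_ne_RR k j hj1)
        · intro j _ _ hbm; exact absurd hbm (PP_ne_DD k j)
      | cons x l' =>
        simp only [List.foldr_cons, PP] at hdec
        injection hdec with h1 h2
        cases l' with
        | nil =>
          simp only [List.foldr_nil] at h2
          subst h2
          subst h1
          simp only [List.map_cons, List.map_nil, List.sum_cons, List.sum_nil, Nat.add_zero]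
          refine cF_le ?_ ?_ ?_ ?_ ?_
          · intro m _ hbm; exact absurd hbm.symm (XI_ne_DD m k hk1)
          · intro j _ _ hbm; exact absurd hbm.symm (PP_ne_DD j k)
          · intro j _ _ hbm; exact absurd hbm.symm (QQ_ne_DD j k)
          · intro j _ _ hbm; exact absurd hbm.symm (RR_ne_DD j k)
          · intro j _ _ hbm
            have hjk : j = k := DD_inj hbm.symm
            subst hjk
            have h3 : cD n j S ≤ cQ n j S := cD_le_cQ haS
            have h4 : cQ n j S ≤ cF n (QQ j) S := cQ_le_cF hk1 hk2 S
            exact le_trans h3 (le_trans h4 (Nat.le_add_left _ _))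
        | cons y l'' =>
          simp only [List.foldr_cons] at h2
          exact Fm.noConfusion h2
    · -- a = QQ k
      subst hQQ
      intro l b hdec
      cases l with
      | nil =>
        simp only [List.foldr_nil] at hdec
        subst hdec
        refine cF_le ?_ ?_ ?_ ?_ ?_
        · intro m _ hbm; exact absurd hbm.symm (XI_ne_QQ m k hk1)
        · intro j hj1 _ hbm; exact absurd hbm.symm (PP_ne_QQ k j hk1)
        · intro j _ _ hbm
          have hjk := QQ_inj hbm
          subst hjk
          rw [cQ_zero (Or.inl haS)]; exact Nat.zero_le _
        · intro j hj1 _ hbm; exact absurd hbm (QQ_ne_RR k j hj1)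
        · intro j _ _ hbm; exact absurd hbm (QQ_ne_DD k j)
      | cons x l' =>
        simp only [List.foldr_cons, QQ] at hdec
        injection hdec with h1 h2
        cases l' with
        | nil =>
          simp only [List.foldr_nil] at h2
          subst h2
          subst h1
          simp only [List.map_cons, List.map_nil, List.sum_cons, List.sum_nil, Nat.add_zero]
          refine cF_le ?_ ?_ ?_ ?_ ?_
          · intro m _ hbm; exact absurd hbm.symm (XI_ne_DD m k hk1)
          · intro j _ _ hbm; exact absurd hbm.symm (PP_ne_DD j k)
          · intro j _ _ hbm; exact absurd hbm.symm (QQ_ne_DD j k)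
          · intro j _ _ hbm; exact absurd hbm.symm (RR_ne_DD j k)
          · intro j _ _ hbm
            have hjk : j = k := DD_inj hbm.symm
            subst hjk
            have h3 : cD n j S ≤ cR n j S := cD_le_cR haS
            have h4 : cR n j S ≤ cF n (RR j) S := cR_le_cF hk1 hk2 S
            exact le_trans h3 (le_trans h4 (Nat.le_add_left _ _))
        | cons y l'' =>
          simp only [List.foldr_cons] at h2
          exact Fm.noConfusion h2
    · -- a = RR k
      subst hRR
      intro l b hdec
      cases l with
      | nil =>
        simp only [List.foldr_nil] at hdec
        subst hdec
        refine cF_le ?_ ?_ ?_ ?_ ?_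
        · intro m _ hbm; exact absurd hbm.symm (XI_ne_RR m k)
        · intro j hj1 _ hbm; exact absurd hbm.symm (PP_ne_RR j k hk1)
        · intro j hj1 _ hbm; exact absurd hbm.symm (QQ_ne_RR j k hk1)
        · intro j _ _ hbm
          have hjk := RR_inj hbm
          subst hjk
          rw [cR_zero haS]; exact Nat.zero_le _
        · intro j _ _ hbm; exact absurd hbm (RR_ne_DD k j)
      | cons x l' =>
        simp only [List.foldr_cons, RR] at hdec
        injection hdec with h1 h2
        obtain ⟨m', hm', hb, hsum⟩ := foldr_XI S l' (k-1) b (Nat.le_trans (Nat.sub_le k 1) hk2) h2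
        subst hb
        subst h1
        simp only [List.map_cons, List.sum_cons]
        refine cF_le ?_ ?_ ?_ ?_ ?_
        · intro m _ hbm
          have hmm : m = m' := XI_inj hbm.symm
          subst hmm
          have hmk : m < k := by omega
          have h3 : cxi n m S ≤ cD n k S + sP n (m+1) (k-1) S :=
            cxi_le_R (n := n) (m := m) (k := k) S hmk hk2 haS
          have h4 : cD n k S ≤ cF n (Fm.atom k) S := cD_le_cF hk1 hk2 S
          exact le_trans h3 (le_trans (Nat.add_le_add h4 hsum) (Nat.le_add_left _ _))
        · intro j hj1 _ hbm; exact absurd hbm (XI_ne_PP m' j hj1)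
        · intro j hj1 _ hbm; exact absurd hbm (XI_ne_QQ m' j hj1)
        · intro j _ _ hbm; exact absurd hbm (XI_ne_RR m' j)
        · intro j hj1 _ hbm; exact absurd hbm (XI_ne_DD m' j hj1)
    · -- a = DD k
      subst hDD
      intro l b hdec
      cases l with
      | nil =>
        simp only [List.foldr_nil] at hdec
        subst hdec
        refine cF_le ?_ ?_ ?_ ?_ ?_
        · intro m _ hbm; exact absurd hbm.symm (XI_ne_DD m k hk1)
        · intro j _ _ hbm; exact absurd hbm.symm (PP_ne_DD j k)
        · intro j _ _ hbm; exact absurd hbm.symm (QQ_ne_DD j k)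
        · intro j _ _ hbm; exact absurd hbm.symm (RR_ne_DD j k)
        · intro j _ _ hbm
          have hjk := DD_inj hbm
          subst hjk
          rw [cD_zero haS]; exact Nat.zero_le _
      | cons x l' =>
        simp only [List.foldr_cons, DD] at hdec
        exact Fm.noConfusion hdec

lemma MAIN {n : ℕ} (hn : 1 ≤ n) {Γ : Multiset Fm} {b : Fm} (d : Deriv Γ b) :
    d.normal → ∀ S : Finset Fm, (∀ a ∈ Γ, IsA n a ∧ a ∈ S) →
    (cF n b S ≤ Deriv.countA (xi n) d ∧
      (¬ d.isIntro → ∃ a, a ∈ Γ ∧ ∃ l : List Fm, a = List.foldr Fm.impl b l ∧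
        (if a = xi n then 1 else 0) + (l.map (fun x => cF n x S)).sum
          ≤ Deriv.countA (xi n) d)) := by
  induction d with
  | assume a =>
    intro _ S hΓ
    have haS := hΓ a (Multiset.mem_singleton_self a)
    have hcnt : Deriv.countA (xi n) (Deriv.assume a) = (if a = xi n then 1 else 0) := rfl
    constructor
    · have := KEY hn haS.1 haS.2 [] a rfl
      simpa [hcnt] using this
    · intro _
      exact ⟨a, Multiset.mem_singleton_self a, [], rfl, by simp [hcnt]⟩
  | intro j d' ih =>
    rename_i Γ' x y
    intro hnorm S hΓ
    have hnorm' : d'.normal := hnorm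
    have hcnt : Deriv.countA (xi n) (Deriv.intro j d') = Deriv.countA (xi n) d' := rfl
    constructor
    · rw [hcnt]
      refine cF_le ?_ ?_ ?_ ?_ ?_
      · -- x.impl y = XI m
        intro m hmn hbm
        cases m with
        | zero => exact Fm.noConfusion hbm
        | succ m0 =>
          rw [XI_succ] at hbm
          injection hbm with hx hy
          have hctx : ∀ a ∈ Γ' + Multiset.replicate j x, IsA n a ∧ a ∈ insert (PP (m0+1)) S := by
            intro a ha
            rcases Multiset.mem_add.mp ha with ha | ha
            · exact ⟨(hΓ a ha).1, Finset.mem_insert_of_mem (hΓ a ha).2⟩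
            · have hax : a = x := (Multiset.eq_of_mem_replicate ha)
              subst hax
              rw [hx]
              exact ⟨Or.inr ⟨m0+1, by omega, by omega, Or.inl rfl⟩, Finset.mem_insert_self _ _⟩
          have h1 := (ih hnorm' (insert (PP (m0+1)) S) hctx).1
          calc cxi n (m0+1) S ≤ cxi n m0 (insert (PP (m0+1)) S) := cxi_le_intro n m0 S
            _ ≤ cF n (XI m0) (insert (PP (m0+1)) S) := cxi_le_cF (by omega) _
            _ = cF n y (insert (PP (m0+1)) S) := by rw [hy]
            _ ≤ _ := h1
      · -- x.impl y = PP k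
        intro k hk1 hk2 hbm
        rw [show PP k = (QQ k).impl (Fm.atom k) from rfl] at hbm
        injection hbm with hx hy
        have hctx : ∀ a ∈ Γ' + Multiset.replicate j x, IsA n a ∧ a ∈ insert (QQ k) S := by
          intro a ha
          rcases Multiset.mem_add.mp ha with ha | ha
          · exact ⟨(hΓ a ha).1, Finset.mem_insert_of_mem (hΓ a ha).2⟩
          · have hax : a = x := (Multiset.eq_of_mem_replicate ha)
            subst hax
            rw [hx]
            exact ⟨Or.inr ⟨k, hk1, hk2, Or.inr (Or.inl rfl)⟩, Finset.mem_insert_self _ _⟩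
        have h1 := (ih hnorm' (insert (QQ k) S) hctx).1
        calc cP n k S ≤ cD n k (insert (QQ k) S) := cP_le_intro n k S
          _ ≤ cF n (DD k) (insert (QQ k) S) := cD_le_cF hk1 hk2 _
          _ = cF n y (insert (QQ k) S) := by rw [hy]; rfl
          _ ≤ _ := h1
      · -- x.impl y = QQ k
        intro k hk1 hk2 hbm
        rw [show QQ k = (RR k).impl (Fm.atom k) from rfl] at hbm
        injection hbm with hx hy
        have hctx : ∀ a ∈ Γ' + Multiset.replicate j x, IsA n a ∧ a ∈ insert (RR k) S := by
          intro a ha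
          rcases Multiset.mem_add.mp ha with ha | ha
          · exact ⟨(hΓ a ha).1, Finset.mem_insert_of_mem (hΓ a ha).2⟩
          · have hax : a = x := (Multiset.eq_of_mem_replicate ha)
            subst hax
            rw [hx]
            exact ⟨Or.inr ⟨k, hk1, hk2, Or.inr (Or.inr (Or.inl rfl))⟩, Finset.mem_insert_self _ _⟩
        have h1 := (ih hnorm' (insert (RR k) S) hctx).1
        calc cQ n k S ≤ cD n k (insert (RR k) S) := cQ_le_intro hk1 hk2 S
          _ ≤ cF n (DD k) (insert (RR k) S) := cD_le_cF hk1 hk2 _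
          _ = cF n y (insert (RR k) S) := by rw [hy]; rfl
          _ ≤ _ := h1
      · -- x.impl y = RR k
        intro k hk1 hk2 hbm
        rw [show RR k = (Fm.atom k).impl (XI (k-1)) from rfl] at hbm
        injection hbm with hx hy
        have hctx : ∀ a ∈ Γ' + Multiset.replicate j x, IsA n a ∧ a ∈ insert (DD k) S := by
          intro a ha
          rcases Multiset.mem_add.mp ha with ha | ha
          · exact ⟨(hΓ a ha).1, Finset.mem_insert_of_mem (hΓ a ha).2⟩
          · have hax : a = x := (Multiset.eq_of_mem_replicate ha)
            subst hax
            rw [hx]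
            exact ⟨Or.inr ⟨k, hk1, hk2, Or.inr (Or.inr (Or.inr rfl))⟩, Finset.mem_insert_self _ _⟩
        have h1 := (ih hnorm' (insert (DD k) S) hctx).1
        calc cR n k S ≤ cxi n (k-1) (insert (DD k) S) := cR_le_intro n k S
          _ ≤ cF n (XI (k-1)) (insert (DD k) S) := cxi_le_cF (Nat.le_trans (Nat.sub_le k 1) hk2) _
          _ = cF n y (insert (DD k) S) := by rw [hy]
          _ ≤ _ := h1
      · -- x.impl y = DD k
        intro k _ _ hbm
        exact Fm.noConfusion hbm
    · intro hni
      exact absurd trivial hni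
  | elim minor major ihminor ihmajor =>
    rename_i Γ₁ Γ₂ am bb
    intro hnorm S hΓ
    obtain ⟨hn1, hn2, hnI⟩ := hnorm
    have hΓ1 : ∀ a ∈ Γ₁, IsA n a ∧ a ∈ S := fun a ha => hΓ a (Multiset.mem_add.mpr (Or.inl ha))
    have hΓ2 : ∀ a ∈ Γ₂, IsA n a ∧ a ∈ S := fun a ha => hΓ a (Multiset.mem_add.mpr (Or.inr ha))
    obtain ⟨a, haΓ, l', hfold, hbound⟩ := (ihmajor hn2 S hΓ2).2 hnI
    have hminor := (ihminor hn1 S hΓ1).1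
    have hcnt : Deriv.countA (xi n) (Deriv.elim minor major)
        = Deriv.countA (xi n) minor + Deriv.countA (xi n) major := rfl
    have hfold2 : a = List.foldr Fm.impl bb (l' ++ [am]) := by
      rw [List.foldr_append]
      exact hfold
    have hsum2 : ((l' ++ [am]).map (fun x => cF n x S)).sum
        = (l'.map (fun x => cF n x S)).sum + cF n am S := by
      simp
    have hspine : (if a = xi n then 1 else 0) + ((l' ++ [am]).map (fun x => cF n x S)).sum
        ≤ Deriv.countA (xi n) (Deriv.elim minor major) := by
      rw [hsum2, hcnt]
      omega
    constructor
    · have hIsA := (hΓ a (Multiset.mem_add.mpr (Or.inr haΓ))).1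
      have haS := (hΓ a (Multiset.mem_add.mpr (Or.inr haΓ))).2
      have := KEY hn hIsA haS (l' ++ [am]) bb hfold2
      exact le_trans this hspine
    · intro _
      exact ⟨a, Multiset.mem_add.mpr (Or.inr haΓ), l' ++ [am], hfold2, hspine⟩

def ufree (n m : ℕ) (S : Finset Fm) : ℕ :=
  ((Finset.Icc (m+1) n).filter (fun j => DD j ∉ S ∧ PP j ∉ S)).card

lemma ufree_le (n m : ℕ) (S : Finset Fm) : ufree n m S ≤ n := by
  refine le_trans (Finset.card_filter_le _ _) ?_
  rw [Nat.card_Icc]; omega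

lemma ufree_antitone {n a b : ℕ} (S : Finset Fm) (h : a ≤ b) : ufree n b S ≤ ufree n a S := by
  apply Finset.card_le_card
  apply Finset.filter_subset_filter
  apply Finset.Icc_subset_Icc (by omega) (le_refl n)

lemma ufree_eq_succ_of_free {n m : ℕ} {S : Finset Fm} (h1 : m+1 ≤ n)
    (hD : DD (m+1) ∉ S) (hP : PP (m+1) ∉ S) : ufree n m S = ufree n (m+1) S + 1 := by
  unfold ufree
  have hicc : Finset.Icc (m+1) n = insert (m+1) (Finset.Icc (m+2) n) := by
    ext x; simp only [Finset.mem_Icc, Finset.mem_insert]; omega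
  rw [hicc, Finset.filter_insert, if_pos ⟨hD, hP⟩, Finset.card_insert_of_notMem]
  simp only [Finset.mem_filter, Finset.mem_Icc]
  omega

lemma ufree_eq_of_locked {n m : ℕ} {S : Finset Fm} (h : DD (m+1) ∈ S ∨ PP (m+1) ∈ S) :
    ufree n m S = ufree n (m+1) S := by
  unfold ufree
  congr 1
  ext x
  simp only [Finset.mem_filter, Finset.mem_Icc]
  constructor
  · rintro ⟨⟨hx1, hx2⟩, hx3, hx4⟩
    refine ⟨⟨?_, hx2⟩, hx3, hx4⟩
    rcases Nat.eq_or_lt_of_le hx1 with he | hlt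
    · exfalso; rw [he] at h; tauto
    · omega
  · rintro ⟨⟨hx1, hx2⟩, hx3, hx4⟩
    exact ⟨⟨by omega, hx2⟩, hx3, hx4⟩

lemma ufree_insert_irrel {n m : ℕ} {S : Finset Fm} {x : Fm}
    (hx : ∀ j, m+1 ≤ j → j ≤ n → x ≠ DD j ∧ x ≠ PP j) :
    ufree n m (insert x S) = ufree n m S := by
  unfold ufree
  congr 1
  apply Finset.filter_congr
  intro j hj
  rw [Finset.mem_Icc] at hj
  have := hx j hj.1 hj.2
  simp only [Finset.mem_insert]
  constructor <;> intro h
  · exact ⟨fun hh => h.1 (Or.inr hh), fun hh => h.2 (Or.inr hh)⟩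
  · constructor
    · rintro (hh | hh)
      · exact this.1 hh.symm
      · exact h.1 hh
    · rintro (hh | hh)
      · exact this.2 hh.symm
      · exact h.2 hh

lemma o3_rfree {n m : ℕ} {S : Finset Fm} (hr : ∀ k, 1 ≤ k → k ≤ n → RR k ∉ S) :
    ∀ j, j ≤ n → o3 n m j S = 2^n := by
  intro j
  induction j with
  | zero => intro _; rw [o3]
  | succ j ih =>
    intro hj
    rw [o3, if_neg, ih (by omega), min_self]
    rintro ⟨_, hmem⟩
    exact hr (j+1) (by omega) hj hmem

lemma cP_eval {n k : ℕ} {S : Finset Fm} (hk1 : 1 ≤ k) (hk2 : k ≤ n)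
    (hD : DD k ∉ S) (hP : PP k ∉ S) (hR : RR k ∉ S) :
    cP n k S = cxi n (k-1) (insert (DD k) (insert (QQ k) S)) := by
  rw [cP, if_neg hP, cD, dif_pos ⟨hk1, hk2⟩]
  have c1 : ¬(DD k ∈ insert (QQ k) S ∨
      (QQ k ∈ insert (QQ k) S ∧ (RR k ∈ insert (QQ k) S ∨ PP k ∈ insert (QQ k) S))) := by
    simp only [Finset.mem_insert]
    rintro (⟨h | h⟩ | ⟨_, (h | h) | (h | h)⟩)
    · exact QQ_ne_DD k k h.symm
    · exact hD h
    · exact QQ_ne_RR k k hk1 h.symm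
    · exact hR h
    · exact PP_ne_QQ k k hk1 h
    · exact hP h
  rw [if_neg c1, if_pos (Finset.mem_insert_self _ _)]

lemma Eval {n : ℕ} : ∀ (c : ℕ) (S : Finset Fm), (AAn n \ S).card ≤ c →
    (∀ k, 1 ≤ k → k ≤ n → RR k ∉ S) → ∀ m, m ≤ n → 2 ^ (ufree n m S) ≤ cxi n m S := by
  intro c
  induction c using Nat.strong_induction_on with
  | _ c IH =>
    intro S hc hr
    -- telescoping lemma for sP
    have hsP : ∀ lo, 1 ≤ lo → ∀ hi, hi ≤ n →
        2 ^ (ufree n (lo-1) S) ≤ sP n lo hi S + 2 ^ (ufree n hi S) := by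
      intro lo hlo hi
      induction hi with
      | zero =>
        intro _
        have h2 : (2:ℕ) ^ ufree n (lo-1) S ≤ 2 ^ ufree n 0 S :=
          Nat.pow_le_pow_right (by omega) (ufree_antitone S (by omega))
        rw [sP]
        omega
      | succ hi ihh =>
        intro hhin
        have ihh' := ihh (by omega)
        by_cases hlt : hi + 1 < lo
        · rw [sP, if_pos hlt]
          have h2 : (2:ℕ) ^ ufree n (lo-1) S ≤ 2 ^ ufree n (hi+1) S :=
            Nat.pow_le_pow_right (by omega) (ufree_antitone S (by omega))
          omega
        · rw [sP, if_neg hlt]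
          by_cases hfree : DD (hi+1) ∉ S ∧ PP (hi+1) ∉ S
          · -- index hi+1 is free
            have hcpe : cP n (hi+1) S
                = cxi n hi (insert (DD (hi+1)) (insert (QQ (hi+1)) S)) := by
              have := cP_eval (k := hi+1) (by omega) hhin hfree.1 hfree.2
                (hr (hi+1) (by omega) hhin)
              simpa using this
            set S2 := insert (DD (hi+1)) (insert (QQ (hi+1)) S) with hS2
            have hcard : (AAn n \ S2).card < (AAn n \ S).card := by
              calc (AAn n \ S2).card
                  < (AAn n \ insert (QQ (hi+1)) S).card := by
                    apply sdiff_insert_card_lt (DD_mem_AAn (by omega) hhin)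
                    simp only [Finset.mem_insert]
                    rintro (h | h)
                    · exact QQ_ne_DD (hi+1) (hi+1) h.symm
                    · exact hfree.1 h
                _ ≤ (AAn n \ S).card := sdiff_insert_card_le _ _ _
            have hr2 : ∀ k, 1 ≤ k → k ≤ n → RR k ∉ S2 := by
              intro k h1 h2
              simp only [hS2, Finset.mem_insert]
              rintro (h | h | h)
              · exact RR_ne_DD k (hi+1) h
              · exact QQ_ne_RR (hi+1) k h1 h.symm
              · exact hr k h1 h2 h
            have hIH2 := IH (AAn n \ S2).card (by omega) S2 (le_refl _) hr2 hi (by omega)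
            have hufe : ufree n hi S2 = ufree n (hi+1) S := by
              rw [hS2]
              have e1 : ufree n hi (insert (DD (hi+1)) (insert (QQ (hi+1)) S))
                  = ufree n (hi+1) (insert (DD (hi+1)) (insert (QQ (hi+1)) S)) :=
                ufree_eq_of_locked (Or.inl (Finset.mem_insert_self _ _))
              rw [e1,
                ufree_insert_irrel (fun j hj1 hj2 => ⟨fun h => absurd (DD_inj h) (by omega),
                  fun h => PP_ne_DD j (hi+1) h.symm⟩),
                ufree_insert_irrel (fun j hj1 hj2 => ⟨fun h => QQ_ne_DD (hi+1) j h,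
                  fun h => PP_ne_QQ (hi+1) j (by omega) h.symm⟩)]
            have hcp2 : 2 ^ ufree n (hi+1) S ≤ cP n (hi+1) S := by
              rw [hcpe, ← hufe]; exact hIH2
            have hstep : ufree n hi S = ufree n (hi+1) S + 1 :=
              ufree_eq_succ_of_free hhin hfree.1 hfree.2
            rw [hstep] at ihh'
            rw [pow_succ] at ihh'
            omega
          · -- index hi+1 is locked
            have hstep : ufree n hi S = ufree n (hi+1) S := by
              apply ufree_eq_of_locked
              by_contra hcon
              push_neg at hcon
              exact hfree ⟨hcon.1, hcon.2⟩
            rw [hstep] at ihh'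
            omega
    -- main claim by induction on m
    intro m
    induction m with
    | zero =>
      intro _
      rw [cxi_eq]
      refine le_min (le_min ?_ ?_) ?_
      · have := hsP (0+1) (by omega) n (le_refl n)
        have hun : ufree n n S = 0 := by
          unfold ufree
          rw [show Finset.Icc (n+1) n = ∅ from Finset.Icc_eq_empty (by omega)]
          simp
        rw [hun] at this
        simp only [show 0+1-1 = 0 from rfl] at this
        omega
      · exact Nat.pow_le_pow_right (by omega) (ufree_le n 0 S)
      · rw [o3_rfree hr n (le_refl n)]
        exact Nat.pow_le_pow_right (by omega) (ufree_le n 0 S)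
    | succ m0 ihm =>
      intro hm
      rw [cxi_eq]
      refine le_min (le_min ?_ ?_) ?_
      · have := hsP (m0+1+1) (by omega) n (le_refl n)
        have hun : ufree n n S = 0 := by
          unfold ufree
          rw [show Finset.Icc (n+1) n = ∅ from Finset.Icc_eq_empty (by omega)]
          simp
        rw [hun] at this
        simp only [show m0+1+1-1 = m0+1 from rfl] at this
        omega
      · -- intro option
        show (2:ℕ) ^ ufree n (m0+1) S ≤ cxi n m0 (insert (PP (m0+1)) S)
        by_cases hmem : PP (m0+1) ∈ S
        · rw [Finset.insert_eq_self.mpr hmem]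
          have h1 := ihm (by omega)
          have h2 : ufree n (m0+1) S ≤ ufree n m0 S := ufree_antitone S (by omega)
          calc (2:ℕ) ^ ufree n (m0+1) S ≤ 2 ^ ufree n m0 S :=
                Nat.pow_le_pow_right (by omega) h2
            _ ≤ cxi n m0 S := h1
        · have hcard : (AAn n \ insert (PP (m0+1)) S).card < (AAn n \ S).card :=
            sdiff_insert_card_lt (PP_mem_AAn (by omega) hm) hmem
          have hr2 : ∀ k, 1 ≤ k → k ≤ n → RR k ∉ insert (PP (m0+1)) S := by
            intro k h1 h2
            simp only [Finset.mem_insert]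
            rintro (h | h)
            · exact PP_ne_RR (m0+1) k h1 h.symm
            · exact hr k h1 h2 h
          have hIH2 := IH (AAn n \ insert (PP (m0+1)) S).card (by omega)
            (insert (PP (m0+1)) S) (le_refl _) hr2 m0 (by omega)
          have hufe : ufree n m0 (insert (PP (m0+1)) S) = ufree n (m0+1) S := by
            have e1 : ufree n m0 (insert (PP (m0+1)) S)
                = ufree n (m0+1) (insert (PP (m0+1)) S) :=
              ufree_eq_of_locked (Or.inr (Finset.mem_insert_self _ _))
            rw [e1]
            exact ufree_insert_irrel (fun j hj1 hj2 =>
              ⟨fun h => PP_ne_DD (m0+1) j h, fun h => by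
                have := PP_inj h; omega⟩)
          rw [← hufe]
          exact hIH2
      · rw [o3_rfree hr n (le_refl n)]
        exact Nat.pow_le_pow_right (by omega) (ufree_le n (m0+1) S)

lemma ROOT {n : ℕ} (hn : 1 ≤ n) : ∀ {Γ : Multiset Fm} {b : Fm} (d : Deriv Γ b),
    d.normal → Γ = 0 → b = phi n → 2 ^ n ≤ Deriv.countA (xi n) d := by
  have hxiXI : xi n = XI n := (XI_eq_xi n hn).symm
  intro Γ b d
  cases d with
  | assume a =>
    intro _ hΓ0 _
    exact absurd hΓ0 (by simp)
  | elim minor major =>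
    rename_i Γ₁ Γ₂ am
    intro hd hΓ0 _
    obtain ⟨hn1, hn2, hnI⟩ := hd
    have hΓ : ∀ a ∈ Γ₁ + Γ₂, IsA n a ∧ a ∈ (∅ : Finset Fm) := by
      rw [hΓ0]
      intro a ha
      exact absurd ha (Multiset.notMem_zero a)
    obtain ⟨a, ha, _⟩ := (MAIN hn (Deriv.elim minor major) ⟨hn1, hn2, hnI⟩ ∅ hΓ).2 (fun h => h)
    rw [hΓ0] at ha
    exact absurd ha (Multiset.notMem_zero a)
  | intro j d' =>
    rename_i x y
    intro hd hΓ0 hb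
    rw [phi] at hb
    injection hb with hx hy
    subst hx; subst hy; subst hΓ0
    have hd' : d'.normal := hd
    have hΓ : ∀ a ∈ (0 : Multiset Fm) + Multiset.replicate j (xi n),
        IsA n a ∧ a ∈ ({xi n} : Finset Fm) := by
      intro a ha
      rcases Multiset.mem_add.mp ha with ha | ha
      · exact absurd ha (Multiset.notMem_zero a)
      · have : a = xi n := Multiset.eq_of_mem_replicate ha
        subst this
        exact ⟨Or.inl hxiXI, Finset.mem_singleton_self _⟩
    have hmain := (MAIN hn d' hd' {xi n} hΓ).1
    have hcf : cxi n 0 ({xi n} : Finset Fm) ≤ cF n (Fm.atom 0) ({xi n} : Finset Fm) :=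
      cxi_le_cF (n := n) (m := 0) (by omega) ({xi n} : Finset Fm)
    have hr : ∀ k, 1 ≤ k → k ≤ n → RR k ∉ ({xi n} : Finset Fm) := by
      intro k hk1 _ hmem
      rw [Finset.mem_singleton, hxiXI] at hmem
      exact XI_ne_RR n k hmem.symm
    have huf : ufree n 0 ({xi n} : Finset Fm) = n := by
      unfold ufree
      rw [Finset.filter_true_of_mem, Nat.card_Icc]
      · omega
      · intro j hj
        rw [Finset.mem_Icc] at hj
        constructor
        · intro hmem
          rw [Finset.mem_singleton, hxiXI] at hmem
          exact XI_ne_DD n j hj.1 hmem.symm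
        · intro hmem
          rw [Finset.mem_singleton, hxiXI] at hmem
          exact XI_ne_PP n j hj.1 hmem.symm
    have heval := Eval ((AAn n \ {xi n}).card) ({xi n} : Finset Fm) (le_refl _) hr 0 (by omega)
    rw [huf] at heval
    calc (2:ℕ) ^ n ≤ cxi n 0 ({xi n} : Finset Fm) := heval
      _ ≤ cF n (Fm.atom 0) ({xi n} : Finset Fm) := hcf
      _ ≤ Deriv.countA (xi n) d' := hmain


/-- every normal proof of φ_n (n ≥ 1) contains at least 2^n
assumption occurrences of the formula ξ_n. -/
theorem lower_bound_assumptions (n : ℕ) (hn : 1 ≤ n)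
    (d : Deriv (0 : Multiset Fm) (phi n)) (hd : d.normal) :
    2 ^ n ≤ Deriv.countA (xi n) d :=
  ROOT hn d hd rfl rfl
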